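/- arXiv:2508.20305 — 2 statements merged into one kernel-verified Lean document; each statement's English description precedes it below -/
import Mathlib

section
/- Let G = (V, E, w) be a finite directed graph with positive integer vertex weights and let G' be its reduction graph. Let (L, S, R) be a directed vertex cut of G, let L_out = { v_out : v ∈ L }, R_in = { v_in : v ∈ R }, and X = V_out \ (L_out ∪ N_{G'}(R_in)). Then (L_out ∪ X, N_{G'}(R_in), R_in) is an undirected vertex cut of G', and its weight satisfies w'(N_{G'}(R_in)) ≤ w(S) + w(V). -/
open scoped Classical

/-- `v_out`: the out-copy of a vertex `v`. -/
abbrev vOut {V : Type*} (v : V) : V ⊕ V := Sum.inl v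

/-- `v_in`: the in-copy of a vertex `v`. -/
abbrev vIn {V : Type*} (v : V) : V ⊕ V := Sum.inr v

/-- `V_out`: the set of out-copies of vertices. -/
def VOut (V : Type*) : Set (V ⊕ V) := Set.range Sum.inl

/-- `V_in`: the set of in-copies of vertices. -/
def VIn (V : Type*) : Set (V ⊕ V) := Set.range Sum.inr

/-- Adjacency relation of the reduction graph `G'` built from the directed edge set `E`:
a clique on `V_out`, a clique on `V_in`, the perfect matching `{v_out, v_in}`,
and an edge `{u_out, v_in}` for every directed edge `(u, v) ∈ E`. -/
def adj' {V : Type*} (E : Set (V × V)) : V ⊕ V → V ⊕ V → Prop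
  | Sum.inl u, Sum.inl v => u ≠ v
  | Sum.inr u, Sum.inr v => u ≠ v
  | Sum.inl u, Sum.inr v => u = v ∨ (u, v) ∈ E
  | Sum.inr u, Sum.inl v => v = u ∨ (v, u) ∈ E

/-- An undirected vertex cut `(L', S', R')` of the reduction graph `G'`:
pairwise disjoint sets covering all vertices, `L'` and `R'` nonempty, and no
edge of `G'` with one endpoint in `L'` and the other in `R'`. -/
structure IsUndirCut {V : Type*} (E : Set (V × V)) (L S R : Set (V ⊕ V)) : Prop where
  disjLS : Disjoint L S
  disjLR : Disjoint L R
  disjSR : Disjoint S R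
  cover : L ∪ S ∪ R = Set.univ
  neL : L.Nonempty
  neR : R.Nonempty
  sep : ∀ x ∈ L, ∀ y ∈ R, ¬ adj' E x y

/-- A directed vertex cut `(L, S, R)` of the directed graph `G = (V, E)`:
pairwise disjoint sets covering all vertices, `L` and `R` nonempty, and no
directed edge from `L` to `R`. -/
structure IsDirCut {V : Type*} (E : Set (V × V)) (L S R : Set V) : Prop where
  disjLS : Disjoint L S
  disjLR : Disjoint L R
  disjSR : Disjoint S R
  cover : L ∪ S ∪ R = Set.univ
  neL : L.Nonempty
  neR : R.Nonempty
  sep : ∀ u ∈ L, ∀ v ∈ R, (u, v) ∉ E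

/-- Weight `w(X)` of a set of vertices of `G`. -/
noncomputable def wt {V : Type*} [Fintype V] (w : V → ℕ) (X : Set V) : ℕ :=
  ∑ v ∈ X.toFinite.toFinset, w v

/-- Weight `w'(X)` of a set of vertices of `G'`, where `w'(v_out) = w'(v_in) = w(v)`. -/
noncomputable def wt' {V : Type*} [Fintype V] (w : V → ℕ) (X : Set (V ⊕ V)) : ℕ :=
  ∑ x ∈ X.toFinite.toFinset, Sum.elim w w x

/-- Neighborhood `N_{G'}(X)`: the vertices outside `X` adjacent in `G'` to some vertex of `X`. -/
def nbr' {V : Type*} (E : Set (V × V)) (X : Set (V ⊕ V)) : Set (V ⊕ V) :=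
  {y | y ∉ X ∧ ∃ x ∈ X, adj' E x y}

/-- In-neighborhood `N^in_G(R)` of a vertex set `R` in the directed graph `G`. -/
def NIn {V : Type*} (E : Set (V × V)) (R : Set V) : Set V :=
  {u | u ∉ R ∧ ∃ v ∈ R, (u, v) ∈ E}

lemma wt_eq {V : Type*} [Fintype V] (w : V → ℕ) (X : Set V) :
    wt w X = ∑ v : V, if v ∈ X then w v else 0 := by
  unfold wt
  rw [← Finset.sum_filter]
  apply Finset.sum_congr _ (fun _ _ => rfl)
  ext v; simp [Set.Finite.mem_toFinset]

lemma wt'_eq {V : Type*} [Fintype V] (w : V → ℕ) (X : Set (V ⊕ V)) :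
    wt' w X = ∑ x : V ⊕ V, if x ∈ X then Sum.elim w w x else 0 := by
  unfold wt'
  rw [← Finset.sum_filter]
  apply Finset.sum_congr _ (fun _ _ => rfl)
  ext v; simp [Set.Finite.mem_toFinset]

lemma wt'_pair {V : Type*} [Fintype V] (w : V → ℕ) (X Y : Set V) :
    wt' w (Sum.inl '' X ∪ Sum.inr '' Y) = wt w X + wt w Y := by
  rw [wt'_eq, wt_eq, wt_eq, Fintype.sum_sum_type]
  congr 1 <;> apply Finset.sum_congr rfl <;> intro v _ <;>
    simp [Set.mem_image]

lemma wt_union_disj {V : Type*} [Fintype V] (w : V → ℕ) {X Y : Set V} (h : Disjoint X Y) :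
    wt w (X ∪ Y) = wt w X + wt w Y := by
  rw [wt_eq, wt_eq, wt_eq, ← Finset.sum_add_distrib]
  apply Finset.sum_congr rfl; intro v _
  by_cases hx : v ∈ X
  · have hy := Set.disjoint_left.mp h hx
    simp [hx, hy]
  · by_cases hy : v ∈ Y <;> simp [hx, hy]

lemma wt_mono {V : Type*} [Fintype V] (w : V → ℕ) {X Y : Set V} (h : X ⊆ Y) :
    wt w X ≤ wt w Y := by
  rw [wt_eq, wt_eq]
  apply Finset.sum_le_sum; intro v _
  by_cases hx : v ∈ X
  · simp [hx, h hx]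
  · simp [hx]

lemma wt_compl {V : Type*} [Fintype V] (w : V → ℕ) (X : Set V) :
    wt w X + wt w Xᶜ = wt w Set.univ := by
  rw [← wt_union_disj w (disjoint_compl_right), Set.union_compl_self]

lemma nbr'_inr_image {V : Type*} (E : Set (V × V)) (R : Set V) (hne : R.Nonempty) :
    nbr' E (Sum.inr '' R) = Sum.inl '' (R ∪ NIn E R) ∪ Sum.inr '' Rᶜ := by
  obtain ⟨r, hr⟩ := hne
  ext x
  cases x with
  | inl u =>
    simp only [nbr', NIn, Set.mem_setOf_eq, Set.mem_union, Set.mem_image,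
      Sum.inl.injEq, Sum.inr.injEq, Set.mem_compl_iff]
    constructor
    · rintro ⟨-, y, ⟨v, hv, rfl⟩, hadj⟩
      simp only [adj'] at hadj
      left
      refine ⟨u, ?_, rfl⟩
      rcases hadj with rfl | he
      · exact Or.inl hv
      · by_cases huR : u ∈ R
        · exact Or.inl huR
        · exact Or.inr ⟨huR, v, hv, he⟩
    · rintro (⟨a, ha, rfl⟩ | ⟨a, _, h⟩)
      · refine ⟨by simp, ?_⟩
        rcases ha with ha | ⟨_, v, hv, he⟩
        · exact ⟨Sum.inr a, ⟨a, ha, rfl⟩, Or.inl rfl⟩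
        · exact ⟨Sum.inr v, ⟨v, hv, rfl⟩, Or.inr he⟩
      · exact absurd h (by simp)
  | inr u =>
    simp only [nbr', NIn, Set.mem_setOf_eq, Set.mem_union, Set.mem_image,
      Sum.inl.injEq, Sum.inr.injEq, Set.mem_compl_iff]
    constructor
    · rintro ⟨h, -⟩
      right
      exact ⟨u, fun hu => h ⟨u, hu, rfl⟩, rfl⟩
    · rintro (⟨a, _, h⟩ | ⟨a, ha, rfl⟩)
      · exact absurd h (by simp)
      · refine ⟨?_, Sum.inr r, ⟨r, hr, rfl⟩, ?_⟩
        · rintro ⟨v, hv, h⟩; exact ha (h ▸ hv)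
        · simp only [adj']
          rintro rfl; exact ha hr

/-- from a directed vertex cut `(L, S, R)` of `G`, with
`L_out = {v_out : v ∈ L}`, `R_in = {v_in : v ∈ R}` and
`X = V_out \ (L_out ∪ N_{G'}(R_in))`, the triple
`(L_out ∪ X, N_{G'}(R_in), R_in)` is an undirected vertex cut of `G'` of weight
`w'(N_{G'}(R_in)) ≤ w(S) + w(V)`. -/
theorem undir_cut_from_dir_cut {V : Type*} [Fintype V] (E : Set (V × V))
    (hE : ∀ v : V, (v, v) ∉ E) (w : V → ℕ) (hw : ∀ v : V, 1 ≤ w v)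
    (L S R : Set V) (hcut : IsDirCut E L S R) :
    IsUndirCut E
        (Sum.inl '' L ∪ (VOut V \ (Sum.inl '' L ∪ nbr' E (Sum.inr '' R))))
        (nbr' E (Sum.inr '' R)) (Sum.inr '' R) ∧
      wt' w (nbr' E (Sum.inr '' R)) ≤ wt w S + wt w Set.univ := by
  obtain ⟨dLS, dLR, dSR, hcov, hneL, hneR, hsep⟩ := hcut
  have hall : ∀ u : V, u ∈ L ∪ S ∪ R := Set.eq_univ_iff_forall.mp hcov
  have hNS : NIn E R ⊆ S := by
    rintro u ⟨huR, v, hv, he⟩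
    have huL : u ∉ L := fun h => hsep u h v hv he
    rcases hall u with (h | h) | h
    · exact absurd h huL
    · exact h
    · exact absurd h huR
  have heq := nbr'_inr_image E R hneR
  have hRN : Disjoint R (NIn E R) := by
    rw [Set.disjoint_left]; rintro u hu ⟨hu', -⟩; exact hu' hu
  constructor
  · refine ⟨?_, ?_, ?_, ?_, ?_, ?_, ?_⟩
    · -- Disjoint L' S'
      rw [Set.disjoint_left]
      rintro x (⟨u, hu, rfl⟩ | ⟨-, hx2⟩) hnx
      · rw [heq] at hnx
        rcases hnx with ⟨a, ha, h⟩ | ⟨a, -, h⟩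
        · rcases Sum.inl.inj h with rfl
          rcases ha with ha | ha
          · exact Set.disjoint_left.mp dLR hu ha
          · exact Set.disjoint_left.mp dLS hu (hNS ha)
        · exact absurd h (by simp)
      · exact hx2 (Or.inr hnx)
    · -- Disjoint L' R'
      rw [Set.disjoint_left]
      rintro x (⟨u, hu, rfl⟩ | ⟨⟨u, rfl⟩, -⟩) ⟨v, hv, h⟩ <;> exact absurd h (by simp)
    · -- Disjoint S' R'
      rw [Set.disjoint_left]
      rintro x hx hxR
      exact hx.1 hxR
    · -- cover
      apply Set.eq_univ_of_forall
      rintro (u | u)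
      · by_cases h : Sum.inl u ∈ Sum.inl '' L ∪ nbr' E (Sum.inr '' R)
        · rcases h with h | h
          · exact Or.inl (Or.inl (Or.inl h))
          · exact Or.inl (Or.inr h)
        · exact Or.inl (Or.inl (Or.inr ⟨⟨u, rfl⟩, h⟩))
      · by_cases hu : u ∈ R
        · exact Or.inr ⟨u, hu, rfl⟩
        · refine Or.inl (Or.inr ?_)
          rw [heq]
          exact Or.inr ⟨u, hu, rfl⟩
    · -- L' nonempty
      obtain ⟨l, hl⟩ := hneL
      exact ⟨Sum.inl l, Or.inl ⟨l, hl, rfl⟩⟩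
    · -- R' nonempty
      exact hneR.image _
    · -- separation
      rintro x hx y ⟨v, hv, rfl⟩ hadj
      rcases hx with ⟨u, hu, rfl⟩ | ⟨⟨u, rfl⟩, hx2⟩
      · simp only [adj'] at hadj
        rcases hadj with rfl | he
        · exact Set.disjoint_left.mp dLR hu hv
        · exact hsep u hu v hv he
      · apply hx2
        right
        refine ⟨by simp, Sum.inr v, ⟨v, hv, rfl⟩, ?_⟩
        simp only [adj'] at hadj ⊢
        exact hadj
  · rw [heq, wt'_pair, wt_union_disj w hRN]
    have h2 : wt w (NIn E R) ≤ wt w S := wt_mono w hNS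
    have h3 := wt_compl w R
    omega
end

section
/- Let G = (V, E, w) be a finite directed graph with positive integer vertex weights, let G' be its reduction graph, and let T ⊆ V be a terminal set. Let T' = { v_out : v ∈ T } ∪ { v_in : v ∈ T }. Assume there exist s, t ∈ T with s ≠ t and (s, t) ∉ E. Then min over pairs s, t ∈ T with s ≠ t and (s, t) ∉ E of κ_G(s, t) equals (min over pairs s', t' ∈ T' with {s', t'} ∉ E' and s' ≠ t' of κ_{G'}(s', t')) − w(V). -/
open scoped Classical

section helpers
variable {V : Type*} [Fintype V]

lemma wt_union (w : V → ℕ) {X Y : Set V} (h : Disjoint X Y) :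
    wt w (X ∪ Y) = wt w X + wt w Y := by
  unfold wt
  rw [show (X ∪ Y).toFinite.toFinset = X.toFinite.toFinset ∪ Y.toFinite.toFinset from by
        ext; simp [Set.mem_setOf_eq]]
  rw [Finset.sum_union]
  rw [Finset.disjoint_left]
  intro a ha hb
  simp only [Set.Finite.mem_toFinset] at ha hb
  exact Set.disjoint_left.mp h ha hb

lemma wt'_union (w : V → ℕ) {X Y : Set (V ⊕ V)} (h : Disjoint X Y) :
    wt' w (X ∪ Y) = wt' w X + wt' w Y := by
  unfold wt'
  rw [show (X ∪ Y).toFinite.toFinset = X.toFinite.toFinset ∪ Y.toFinite.toFinset from by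
        ext; simp [Set.mem_setOf_eq]]
  rw [Finset.sum_union]
  rw [Finset.disjoint_left]
  intro a ha hb
  simp only [Set.Finite.mem_toFinset] at ha hb
  exact Set.disjoint_left.mp h ha hb

lemma wt'_inl (w : V → ℕ) (X : Set V) : wt' w (Sum.inl '' X) = wt w X := by
  unfold wt' wt
  rw [show (Sum.inl '' X : Set (V ⊕ V)).toFinite.toFinset
        = X.toFinite.toFinset.image Sum.inl from by ext x; cases x <;> simp [Set.mem_setOf_eq]]
  rw [Finset.sum_image (by simp)]
  simp

lemma wt'_inr (w : V → ℕ) (X : Set V) : wt' w (Sum.inr '' X) = wt w X := by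
  unfold wt' wt
  rw [show (Sum.inr '' X : Set (V ⊕ V)).toFinite.toFinset
        = X.toFinite.toFinset.image Sum.inr from by ext x; cases x <;> simp [Set.mem_setOf_eq]]
  rw [Finset.sum_image (by simp)]
  simp

lemma wt_add_compl (w : V → ℕ) (X : Set V) : wt w X + wt w Xᶜ = wt w Set.univ := by
  rw [← wt_union w disjoint_compl_right, Set.union_compl_self]

end helpers

section struct
variable {V : Type*}

lemma adj'_symm (E : Set (V × V)) (x y : V ⊕ V) : adj' E x y ↔ adj' E y x := by
  cases x <;> cases y <;> simp [adj', ne_comm]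

lemma IsUndirCut.swap {E : Set (V × V)} {L S R : Set (V ⊕ V)}
    (h : IsUndirCut E L S R) : IsUndirCut E R S L where
  disjLS := h.disjSR.symm
  disjLR := h.disjLR.symm
  disjSR := h.disjLS.symm
  cover := by rw [← h.cover]; ext x; simp; tauto
  neL := h.neR
  neR := h.neL
  sep := fun x hx y hy hadj => h.sep y hy x hx ((adj'_symm E x y).mp hadj)

lemma middle_eq_compl {α : Type*} {L S R : Set α} (dLS : Disjoint L S) (dSR : Disjoint S R)
    (cover : L ∪ S ∪ R = Set.univ) : S = (L ∪ R)ᶜ := by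
  ext x
  have hc : x ∈ L ∪ S ∪ R := cover ▸ Set.mem_univ x
  simp only [Set.mem_union] at hc
  have h1 := Set.disjoint_left.mp dLS
  have h2 := Set.disjoint_left.mp dSR
  simp only [Set.mem_compl_iff, Set.mem_union]
  push_neg
  constructor
  · intro hx
    exact ⟨fun h => h1 h hx, fun h => h2 hx h⟩
  · rintro ⟨hL, hR⟩
    tauto

lemma compl_sum (A B : Set V) :
    (Sum.inl '' A ∪ Sum.inr '' B : Set (V ⊕ V))ᶜ = Sum.inl '' Aᶜ ∪ Sum.inr '' Bᶜ := by
  ext x; cases x <;> simp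

end struct

lemma sInf_image_add (c : ℕ) (A : Set ℕ) (h : A.Nonempty) :
    sInf ((· + c) '' A) = sInf A + c := by
  apply le_antisymm
  · exact Nat.sInf_le ⟨_, Nat.sInf_mem h, rfl⟩
  · apply le_csInf (h.image _)
    rintro b ⟨a, ha, rfl⟩
    exact Nat.add_le_add_right (Nat.sInf_le ha) c

lemma disj_inl_inr {V : Type*} (A B : Set V) :
    Disjoint (Sum.inl '' A : Set (V ⊕ V)) (Sum.inr '' B) := by
  rw [Set.disjoint_left]
  rintro x ⟨a, _, rfl⟩ ⟨b, _, h⟩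
  exact Sum.inr_ne_inl h

lemma kappa_eq {V : Type*} [Fintype V] (E : Set (V × V)) (w : V → ℕ)
    {s t : V} (hst : s ≠ t) (hstE : (s, t) ∉ E) :
    sInf {k' : ℕ | ∃ L' S' R' : Set (V ⊕ V),
        IsUndirCut E L' S' R' ∧ Sum.inl s ∈ L' ∧ Sum.inr t ∈ R' ∧ k' = wt' w S'} =
    sInf {k' : ℕ | ∃ L S R : Set V,
        IsDirCut E L S R ∧ s ∈ L ∧ t ∈ R ∧ k' = wt w S} + wt w Set.univ := by
  set c := wt w Set.univ with hc
  set A := {k' : ℕ | ∃ L S R : Set V,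
      IsDirCut E L S R ∧ s ∈ L ∧ t ∈ R ∧ k' = wt w S} with hA
  have hAne : A.Nonempty := by
    refine ⟨_, {s}, ({s} ∪ {t} : Set V)ᶜ, {t},
      ⟨?_, Set.disjoint_singleton.mpr hst, ?_, ?_, ⟨s, rfl⟩, ⟨t, rfl⟩, ?_⟩, rfl, rfl, rfl⟩
    · rw [Set.disjoint_left]; intro x hx hx'; exact hx' (Or.inl hx)
    · rw [Set.disjoint_left]; intro x hx hx'; exact hx (Or.inr hx')
    · ext x; simp only [Set.mem_union, Set.mem_compl_iff, Set.mem_univ, iff_true]; tauto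
    · intro u hu v hv h
      rw [Set.mem_singleton_iff] at hu hv
      rw [hu, hv] at h; exact hstE h
  have hBA : {k' : ℕ | ∃ L' S' R' : Set (V ⊕ V),
        IsUndirCut E L' S' R' ∧ Sum.inl s ∈ L' ∧ Sum.inr t ∈ R' ∧ k' = wt' w S'}
      = (· + c) '' A := by
    apply Set.Subset.antisymm
    · rintro k ⟨L', S', R', hcut, hs, ht, rfl⟩
      set L : Set V := Sum.inl ⁻¹' L' with hLdef
      set R : Set V := Sum.inr ⁻¹' R' with hRdef
      have hnoInrL : ∀ v : V, Sum.inr v ∉ L' := by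
        intro v hv
        by_cases hvt : v = t
        · exact Set.disjoint_left.mp hcut.disjLR (hvt ▸ hv) ht
        · exact hcut.sep _ hv _ ht hvt
      have hnoInlR : ∀ v : V, Sum.inl v ∉ R' := by
        intro v hv
        by_cases hvs : s = v
        · exact Set.disjoint_left.mp hcut.disjLR hs (hvs ▸ hv)
        · exact hcut.sep _ hs _ hv hvs
      have hL' : L' = Sum.inl '' L := by
        ext x
        cases x with
        | inl v => simp [hLdef]
        | inr v => simp [hnoInrL v]
      have hR' : R' = Sum.inr '' R := by
        ext x
        cases x with
        | inl v => simp [hnoInlR v]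
        | inr v => simp [hRdef]
      have hdisjLR : Disjoint L R := by
        rw [Set.disjoint_left]
        intro v hvL hvR
        exact hcut.sep _ hvL _ hvR (Or.inl rfl)
      have hS' : S' = Sum.inl '' Lᶜ ∪ Sum.inr '' Rᶜ := by
        rw [middle_eq_compl hcut.disjLS hcut.disjSR hcut.cover, hL', hR', compl_sum]
      have hwS' : wt' w S' = wt w Lᶜ + wt w Rᶜ := by
        rw [hS', wt'_union w (disj_inl_inr _ _), wt'_inl, wt'_inr]
      have h1 := wt_add_compl w L
      have h2 := wt_add_compl w R
      have h3 := wt_add_compl w (L ∪ R)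
      have h4 := wt_union w hdisjLR
      refine ⟨wt w (L ∪ R)ᶜ, ⟨L, (L ∪ R)ᶜ, R,
        ⟨Set.disjoint_left.mpr fun v hv hv' => hv' (Or.inl hv), hdisjLR,
         Set.disjoint_left.mpr fun v hv hv' => hv (Or.inr hv'), ?_, ⟨s, hs⟩, ⟨t, ht⟩,
         fun u hu v hv hE' => hcut.sep _ hu _ hv (Or.inr hE')⟩, hs, ht, rfl⟩, ?_⟩
      · ext v
        simp only [Set.mem_union, Set.mem_compl_iff, Set.mem_univ, iff_true]
        tauto
      · simp only []
        omega
    · rintro k ⟨a, ⟨L, S, R, hcut, hsL, htR, rfl⟩, rfl⟩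
      have hdLSR : Disjoint L (S ∪ R) := Set.disjoint_union_right.mpr ⟨hcut.disjLS, hcut.disjLR⟩
      have hdLSR2 : Disjoint (L ∪ S) R := Set.disjoint_union_left.mpr ⟨hcut.disjLR, hcut.disjSR⟩
      refine ⟨Sum.inl '' L, Sum.inl '' (S ∪ R) ∪ Sum.inr '' (L ∪ S), Sum.inr '' R,
        ⟨?_, ?_, ?_, ?_, ⟨Sum.inl s, ⟨s, hsL, rfl⟩⟩, ⟨Sum.inr t, ⟨t, htR, rfl⟩⟩, ?_⟩,
        ⟨s, hsL, rfl⟩, ⟨t, htR, rfl⟩, ?_⟩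
      · rw [Set.disjoint_left]
        rintro x ⟨v, hv, rfl⟩ (⟨u, hu, hux⟩ | ⟨u, hu, hux⟩)
        · rw [Sum.inl.injEq] at hux
          exact Set.disjoint_left.mp hdLSR hv (hux ▸ hu)
        · exact Sum.inr_ne_inl hux
      · rw [Set.disjoint_left]
        rintro x ⟨v, hv, rfl⟩ ⟨u, hu, hux⟩
        exact Sum.inr_ne_inl hux
      · rw [Set.disjoint_left]
        rintro x (⟨u, hu, rfl⟩ | ⟨u, hu, rfl⟩) ⟨v, hv, hvx⟩
        · exact Sum.inr_ne_inl hvx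
        · rw [Sum.inr.injEq] at hvx
          exact Set.disjoint_left.mp hdLSR2 (hvx ▸ hu : u ∈ L ∪ S) ((hvx ▸ hv))
      · ext x
        have hv : ∀ v : V, v ∈ L ∪ S ∪ R := fun v => hcut.cover ▸ Set.mem_univ v
        cases x with
        | inl v =>
          have := hv v
          simp only [Set.mem_union] at this
          simp only [Set.mem_union, Set.mem_image, Sum.inl.injEq, Set.mem_univ, iff_true]
          rcases this with (h | h) | h
          · exact Or.inl (Or.inl ⟨v, h, rfl⟩)
          · exact Or.inl (Or.inr (Or.inl ⟨v, Or.inl h, rfl⟩))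
          · exact Or.inl (Or.inr (Or.inl ⟨v, Or.inr h, rfl⟩))
        | inr v =>
          have := hv v
          simp only [Set.mem_union] at this
          simp only [Set.mem_union, Set.mem_image, Set.mem_univ, iff_true]
          rcases this with (h | h) | h
          · exact Or.inl (Or.inr (Or.inr ⟨v, Or.inl h, rfl⟩))
          · exact Or.inl (Or.inr (Or.inr ⟨v, Or.inr h, rfl⟩))
          · exact Or.inr ⟨v, h, rfl⟩
      · rintro x ⟨u, hu, rfl⟩ y ⟨v, hv, rfl⟩ hadj
        rcases hadj with h | h
        · exact Set.disjoint_left.mp hcut.disjLR hu (h ▸ hv)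
        · exact hcut.sep u hu v hv h
      · rw [wt'_union w (disj_inl_inr _ _), wt'_inl, wt'_inr,
            wt_union w hcut.disjSR, wt_union w hcut.disjLS]
        have hpart : wt w (L ∪ S) + wt w R = c := by
          rw [← wt_union w hdLSR2, hcut.cover]
        rw [wt_union w hcut.disjLS] at hpart
        show wt w S + c = wt w S + wt w R + (wt w L + wt w S)
        omega
  rw [hBA]
  exact sInf_image_add c A hAne

lemma undirSet_symm {V : Type*} [Fintype V] (E : Set (V × V)) (w : V → ℕ) (s' t' : V ⊕ V) :
    {k' : ℕ | ∃ L' S' R' : Set (V ⊕ V),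
        IsUndirCut E L' S' R' ∧ s' ∈ L' ∧ t' ∈ R' ∧ k' = wt' w S'}
    = {k' : ℕ | ∃ L' S' R' : Set (V ⊕ V),
        IsUndirCut E L' S' R' ∧ t' ∈ L' ∧ s' ∈ R' ∧ k' = wt' w S'} := by
  ext k
  constructor <;> rintro ⟨L, S, R, hcu, h1, h2, rfl⟩ <;> exact ⟨R, S, L, hcu.swap, h2, h1, rfl⟩

/-- Corollary `corollary:steiner-min-cut-G'-G`: for a terminal
set `T ⊆ V` with `T' = {v_out : v ∈ T} ∪ {v_in : v ∈ T}`, assuming some pair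
`s, t ∈ T` with `s ≠ t` and `(s, t) ∉ E` exists,
`min_{s,t ∈ T, s ≠ t, (s,t) ∉ E} κ_G(s, t)
  = (min_{s',t' ∈ T', s' ≠ t', {s',t'} ∉ E'} κ_{G'}(s', t')) - w(V)`. -/
theorem steiner_min_cut_reduction {V : Type*} [Fintype V] (E : Set (V × V))
    (hE : ∀ v : V, (v, v) ∉ E) (w : V → ℕ) (hw : ∀ v : V, 1 ≤ w v)
    (T : Set V) (hex : ∃ s ∈ T, ∃ t ∈ T, s ≠ t ∧ (s, t) ∉ E) :
    sInf {k : ℕ | ∃ s ∈ T, ∃ t ∈ T, s ≠ t ∧ (s, t) ∉ E ∧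
        k = sInf {k' : ℕ | ∃ L S R : Set V,
          IsDirCut E L S R ∧ s ∈ L ∧ t ∈ R ∧ k' = wt w S}} =
      sInf {k : ℕ | ∃ s' ∈ Sum.inl '' T ∪ Sum.inr '' T,
          ∃ t' ∈ Sum.inl '' T ∪ Sum.inr '' T, s' ≠ t' ∧ ¬ adj' E s' t' ∧
          k = sInf {k' : ℕ | ∃ L' S' R' : Set (V ⊕ V),
            IsUndirCut E L' S' R' ∧ s' ∈ L' ∧ t' ∈ R' ∧ k' = wt' w S'}}
        - wt w Set.univ := by
  set c := wt w Set.univ with hc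
  set A := {k : ℕ | ∃ s ∈ T, ∃ t ∈ T, s ≠ t ∧ (s, t) ∉ E ∧
      k = sInf {k' : ℕ | ∃ L S R : Set V,
        IsDirCut E L S R ∧ s ∈ L ∧ t ∈ R ∧ k' = wt w S}} with hA
  have hAne : A.Nonempty := by
    obtain ⟨s, hs, t, ht, hst, hstE⟩ := hex
    exact ⟨_, s, hs, t, ht, hst, hstE, rfl⟩
  have hK : {k : ℕ | ∃ s' ∈ Sum.inl '' T ∪ Sum.inr '' T,
      ∃ t' ∈ Sum.inl '' T ∪ Sum.inr '' T, s' ≠ t' ∧ ¬ adj' E s' t' ∧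
      k = sInf {k' : ℕ | ∃ L' S' R' : Set (V ⊕ V),
        IsUndirCut E L' S' R' ∧ s' ∈ L' ∧ t' ∈ R' ∧ k' = wt' w S'}}
      = (· + c) '' A := by
    apply Set.Subset.antisymm
    · rintro k ⟨s', hs', t', ht', hne, hnadj, rfl⟩
      cases s' with
      | inl a =>
        have haT : a ∈ T := by simpa using hs'
        cases t' with
        | inl b =>
          have hab : a = b := by simpa [adj'] using hnadj
          exact absurd (by rw [hab]) hne
        | inr b =>
          have hbT : b ∈ T := by simpa using ht'
          rw [show adj' E (Sum.inl a) (Sum.inr b) = (a = b ∨ (a, b) ∈ E) from rfl] at hnadj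
          push_neg at hnadj
          exact ⟨_, ⟨a, haT, b, hbT, hnadj.1, hnadj.2, rfl⟩,
            (kappa_eq E w hnadj.1 hnadj.2).symm⟩
      | inr a =>
        have haT : a ∈ T := by simpa using hs'
        cases t' with
        | inr b =>
          have hab : a = b := by simpa [adj'] using hnadj
          exact absurd (by rw [hab]) hne
        | inl b =>
          have hbT : b ∈ T := by simpa using ht'
          rw [show adj' E (Sum.inr a) (Sum.inl b) = (b = a ∨ (b, a) ∈ E) from rfl] at hnadj
          push_neg at hnadj
          refine ⟨_, ⟨b, hbT, a, haT, hnadj.1, hnadj.2, rfl⟩, ?_⟩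
          rw [undirSet_symm E w (Sum.inr a) (Sum.inl b)]
          exact (kappa_eq E w hnadj.1 hnadj.2).symm
    · rintro k ⟨x, ⟨s, hs, t, ht, hst, hstE, rfl⟩, rfl⟩
      refine ⟨Sum.inl s, Or.inl ⟨s, hs, rfl⟩, Sum.inr t, Or.inr ⟨t, ht, rfl⟩,
        by simp, ?_, (kappa_eq E w hst hstE).symm⟩
      rintro (h | h)
      exacts [hst h, hstE h]
  rw [hK, sInf_image_add c A hAne, Nat.add_sub_cancel]
end
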